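/- arXiv:1803.10141 — 3 statements merged into one kernel-verified Lean document; each statement's English description precedes it below -/
import Mathlib

section
/- Let 1 ≤ k ≤ n and p ∈ (0, 1). The function φ_{k,n}(x) := (e_k(x^p) / e_{k-1}(x^p))^(1/p) is concave on the nonnegative orthant ℝ₊ⁿ (equivalently, on the positive orthant where it is finite and positive). -/
/-- The `k`-th elementary symmetric polynomial of `x ∈ ℝⁿ`:
`e_k(x) = Σ_{S ⊆ {1,…,n}, |S| = k} Π_{i ∈ S} x_i` (with `e_0 = 1`). -/
noncomputable def esymm (n k : ℕ) (x : Fin n → ℝ) : ℝ :=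
  ∑ S ∈ Finset.powersetCard k (Finset.univ : Finset (Fin n)), ∏ i ∈ S, x i

/-! Marcus–Lopes: `F_k = e_k / e_{k-1}` is superadditive and 1-homogeneous on the nonnegative
orthant. This goes by induction on `k` through `(k + 1) F_{k+1}(x) = ∑ᵢ xᵢ ∥ F_k(x without xᵢ)`,
where `a ∥ b = ab / (a + b)` is the parallel sum, itself superadditive and monotone.

For any `G ≥ 0` that is superadditive and 1-homogeneous on the orthant (hence monotone),
`φ(x) = G(x^p)^{1/p}` inherits both properties when `0 < p ≤ 1`: with `a = φ(x)`, `b = φ(y)`,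
`λ = a / (a + b)`, `μ = b / (a + b)`, concavity of `t ↦ t^p` gives
`λ^{1-p} xᵢ^p + μ^{1-p} yᵢ^p ≤ (xᵢ + yᵢ)^p`, hence
`(a + b)^p = G(λ^{1-p} x^p) + G(μ^{1-p} y^p) ≤ G((x + y)^p)`. Superadditivity together with
1-homogeneity is concavity. -/

section ElementarySymmetric

open Finset

variable {ι : Type*} {s t : Finset ι} {k : ℕ} {x : ι → ℝ}

noncomputable def esymmOn (s : Finset ι) (k : ℕ) (x : ι → ℝ) : ℝ :=
  ∑ T ∈ s.powersetCard k, ∏ i ∈ T, x i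

@[simp] lemma esymmOn_zero : esymmOn s 0 x = 1 := by simp [esymmOn]

lemma esymmOn_one : esymmOn s 1 x = ∑ i ∈ s, x i := by simp [esymmOn, powersetCard_one]

@[simp] lemma esymmOn_empty_succ : esymmOn (∅ : Finset ι) (k + 1) x = 0 := by
  rw [esymmOn, powersetCard_eq_empty.2 (by simp), sum_empty]

lemma esymmOn_nonneg (hx : 0 ≤ x) : 0 ≤ esymmOn s k x :=
  sum_nonneg fun _ _ ↦ prod_nonneg fun i _ ↦ hx i

lemma esymmOn_mono (hx : 0 ≤ x) (hst : s ⊆ t) : esymmOn s k x ≤ esymmOn t k x :=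
  sum_le_sum_of_subset_of_nonneg (powersetCard_mono hst) fun _ _ _ ↦ prod_nonneg fun i _ ↦ hx i

lemma esymmOn_smul (c : ℝ) : esymmOn s k (c • x) = c ^ k * esymmOn s k x := by
  rw [esymmOn, esymmOn, mul_sum]
  refine sum_congr rfl fun T hT ↦ ?_
  simp [prod_mul_distrib, (mem_powersetCard.1 hT).2]

variable [DecidableEq ι]

lemma esymmOn_insert_succ {a : ι} (ha : a ∉ s) :
    esymmOn (insert a s) (k + 1) x = esymmOn s (k + 1) x + x a * esymmOn s k x := by
  rw [esymmOn, powersetCard_succ_insert ha, sum_union, sum_image, esymmOn, esymmOn, mul_sum]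
  · congr 1
    refine sum_congr rfl fun T hT ↦ prod_insert fun haT ↦ ha ?_
    exact (mem_powersetCard.1 hT).1 haT
  · intro T hT U hU hTU
    have hT' := fun h ↦ ha ((mem_powersetCard.1 (mem_coe.1 hT)).1 h)
    have hU' := fun h ↦ ha ((mem_powersetCard.1 (mem_coe.1 hU)).1 h)
    rw [← erase_insert hT', hTU, erase_insert hU']
  · refine disjoint_left.2 fun T hT hT' ↦ ?_
    obtain ⟨U, -, rfl⟩ := mem_image.1 hT'
    exact ha ((mem_powersetCard.1 hT).1 (mem_insert_self a U))

lemma esymmOn_erase_succ {i : ι} (hi : i ∈ s) :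
    esymmOn s (k + 1) x = esymmOn (s.erase i) (k + 1) x + x i * esymmOn (s.erase i) k x := by
  conv_lhs => rw [← insert_erase hi]
  exact esymmOn_insert_succ (notMem_erase i s)

lemma sum_mul_esymmOn_erase (s : Finset ι) (k : ℕ) :
    ∑ i ∈ s, x i * esymmOn (s.erase i) k x = (k + 1) * esymmOn s (k + 1) x := by
  induction s using Finset.induction_on generalizing k with
  | empty => simp
  | insert a s ha ih =>
    rw [sum_insert ha, erase_insert ha, esymmOn_insert_succ ha]
    have herase : ∀ i ∈ s, (insert a s).erase i = insert a (s.erase i) := fun i hi ↦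
      erase_insert_of_ne fun h ↦ ha (h ▸ hi)
    rw [sum_congr rfl fun i hi ↦ by rw [herase i hi]]
    cases k with
    | zero => simp [esymmOn_one, add_comm]
    | succ k =>
      have hins : ∀ i ∈ s, x i * esymmOn (insert a (s.erase i)) (k + 1) x =
          x i * esymmOn (s.erase i) (k + 1) x + x a * (x i * esymmOn (s.erase i) k x) := by
        intro i _
        rw [esymmOn_insert_succ fun h ↦ ha (mem_of_mem_erase h)]
        ring
      rw [sum_congr rfl hins, sum_add_distrib, ← mul_sum, ih, ih]
      push_cast
      ring

lemma esymmOn_succ_eq_zero (hx : 0 ≤ x) (h : esymmOn s k x = 0) : esymmOn s (k + 1) x = 0 := by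
  have hle : (k + 1 : ℝ) * esymmOn s (k + 1) x ≤ 0 := by
    rw [← sum_mul_esymmOn_erase, ← sum_const_zero]
    refine sum_le_sum fun i _ ↦ ?_
    exact (mul_le_mul_of_nonneg_left (esymmOn_mono hx (erase_subset i s)) (hx i)).trans_eq
      (by simp [h])
  exact le_antisymm (nonpos_of_mul_nonpos_right hle (by positivity)) (esymmOn_nonneg hx)

end ElementarySymmetric

noncomputable def parallelSum (a b : ℝ) : ℝ := a * b / (a + b)

lemma parallelSum_div_right {a d e : ℝ} (h : d = 0 → e = 0) :
    parallelSum a (e / d) = a * e / (e + a * d) := by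
  rcases eq_or_ne d 0 with rfl | hd
  · simp [parallelSum, h rfl]
  · rw [parallelSum, add_div' _ _ _ hd, mul_div_assoc', div_div_div_cancel_right₀ hd, add_comm]

lemma parallelSum_le_parallelSum_right {a b c : ℝ} (ha : 0 ≤ a) (hb : 0 ≤ b) (hbc : b ≤ c) :
    parallelSum a b ≤ parallelSum a c := by
  rcases (add_nonneg ha hb).eq_or_lt with hab | hab
  · simp [parallelSum, show a = 0 by linarith]
  · rw [parallelSum, parallelSum, div_le_div_iff₀ hab (by linarith)]
    nlinarith [mul_le_mul_of_nonneg_left hbc (mul_nonneg ha ha)]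

lemma parallelSum_add_le {a b c d : ℝ} (ha : 0 ≤ a) (hb : 0 ≤ b) (hc : 0 ≤ c) (hd : 0 ≤ d) :
    parallelSum a c + parallelSum b d ≤ parallelSum (a + b) (c + d) := by
  rcases (add_nonneg ha hc).eq_or_lt with hac | hac
  · obtain ⟨rfl, rfl⟩ : a = 0 ∧ c = 0 := ⟨by linarith, by linarith⟩
    simp [parallelSum]
  rcases (add_nonneg hb hd).eq_or_lt with hbd | hbd
  · obtain ⟨rfl, rfl⟩ : b = 0 ∧ d = 0 := ⟨by linarith, by linarith⟩
    simp [parallelSum]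
  rw [parallelSum, parallelSum, parallelSum, div_add_div _ _ hac.ne' hbd.ne',
    div_le_div_iff₀ (mul_pos hac hbd) (by linarith)]
  nlinarith [sq_nonneg (a * d - b * c), mul_nonneg (mul_nonneg ha hc) (add_nonneg hb hd),
    mul_nonneg (mul_nonneg hb hd) (add_nonneg ha hc)]

section MarcusLopes

open Finset

variable {ι : Type*} {s : Finset ι} {k : ℕ} {x y : ι → ℝ}

noncomputable def esymmRatio (s : Finset ι) (k : ℕ) (x : ι → ℝ) : ℝ :=
  esymmOn s k x / esymmOn s (k - 1) x

lemma esymmRatio_nonneg (hx : 0 ≤ x) : 0 ≤ esymmRatio s k x :=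
  div_nonneg (esymmOn_nonneg hx) (esymmOn_nonneg hx)

lemma esymmRatio_one : esymmRatio s 1 x = ∑ i ∈ s, x i := by
  simp [esymmRatio, esymmOn_one]

lemma esymmRatio_smul (c : ℝ) (hk : 1 ≤ k) : esymmRatio s k (c • x) = c * esymmRatio s k x := by
  obtain ⟨k, rfl⟩ := Nat.exists_eq_add_of_le' hk
  rcases eq_or_ne c 0 with rfl | hc
  · rw [esymmRatio, esymmOn_smul]
    simp
  · rw [esymmRatio, esymmRatio, esymmOn_smul, esymmOn_smul, Nat.add_sub_cancel, pow_succ,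
      mul_assoc, mul_div_mul_left _ _ (pow_ne_zero k hc), mul_div_assoc]

variable [DecidableEq ι]

lemma sum_parallelSum_esymmRatio_erase (hx : 0 ≤ x) (hk : 1 ≤ k) :
    ∑ i ∈ s, parallelSum (x i) (esymmRatio (s.erase i) k x) =
      (k + 1) * esymmRatio s (k + 1) x := by
  obtain ⟨k, rfl⟩ := Nat.exists_eq_add_of_le' hk
  have hterm : ∀ i ∈ s, parallelSum (x i) (esymmRatio (s.erase i) (k + 1) x) =
      x i * esymmOn (s.erase i) (k + 1) x / esymmOn s (k + 1) x := by
    intro i hi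
    -- no side condition: `e_k = 0` forces `e_{k+1} = 0` on the orthant
    rw [esymmRatio, Nat.add_sub_cancel, parallelSum_div_right (esymmOn_succ_eq_zero hx),
      esymmOn_erase_succ hi]
  rw [sum_congr rfl hterm, ← sum_div, sum_mul_esymmOn_erase, esymmRatio, Nat.add_sub_cancel,
    mul_div_assoc]

theorem esymmRatio_add_le (hx : 0 ≤ x) (hy : 0 ≤ y) (hk : 1 ≤ k) :
    esymmRatio s k x + esymmRatio s k y ≤ esymmRatio s k (x + y) := by
  induction k, hk using Nat.le_induction generalizing s with
  | base => simp [esymmRatio_one, sum_add_distrib]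
  | succ k hk ih =>
    refine le_of_mul_le_mul_left ?_ (by positivity : (0 : ℝ) < k + 1)
    rw [mul_add, ← sum_parallelSum_esymmRatio_erase hx hk,
      ← sum_parallelSum_esymmRatio_erase hy hk,
      ← sum_parallelSum_esymmRatio_erase (add_nonneg hx hy) hk, ← sum_add_distrib]
    refine sum_le_sum fun i _ ↦ ?_
    calc _ ≤ parallelSum (x i + y i)
            (esymmRatio (s.erase i) k x + esymmRatio (s.erase i) k y) :=
          parallelSum_add_le (hx i) (hy i) (esymmRatio_nonneg hx) (esymmRatio_nonneg hy)
      _ ≤ _ := parallelSum_le_parallelSum_right (add_nonneg (hx i) (hy i))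
          (add_nonneg (esymmRatio_nonneg hx) (esymmRatio_nonneg hy)) ih

end MarcusLopes

lemma concaveOn_of_add_le_of_map_smul {𝕜 E β : Type*} [Semiring 𝕜] [PartialOrder 𝕜]
    [AddCommMonoid E] [AddCommMonoid β] [PartialOrder β] [Module 𝕜 E] [SMul 𝕜 β]
    {s : Set E} {f : E → β} (hs : Convex 𝕜 s) (hsmul_mem : ∀ x ∈ s, ∀ c : 𝕜, 0 ≤ c → c • x ∈ s)
    (hsmul : ∀ x ∈ s, ∀ c : 𝕜, 0 ≤ c → f (c • x) = c • f x)
    (hadd : ∀ x ∈ s, ∀ y ∈ s, f x + f y ≤ f (x + y)) : ConcaveOn 𝕜 s f := by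
  refine ⟨hs, fun x hx y hy a b ha hb _ ↦ ?_⟩
  rw [← hsmul x hx a ha, ← hsmul y hy b hb]
  exact hadd _ (hsmul_mem x hx a ha) _ (hsmul_mem y hy b hb)

lemma monotoneOn_of_add_le {E β : Type*} [AddCommGroup E] [PartialOrder E] [IsOrderedAddMonoid E]
    [AddCommMonoid β] [PartialOrder β] [IsOrderedAddMonoid β] {f : E → β}
    (hf : ∀ x, 0 ≤ x → 0 ≤ f x) (hadd : ∀ x y, 0 ≤ x → 0 ≤ y → f x + f y ≤ f (x + y)) :
    MonotoneOn f (Set.Ici 0) := by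
  intro x hx y _ hxy
  have hyx : 0 ≤ y - x := sub_nonneg.2 hxy
  calc f x ≤ f x + f (y - x) := le_add_of_nonneg_right (hf _ hyx)
    _ ≤ f y := by simpa using hadd x (y - x) hx hyx

lemma Real.weighted_rpow_add_le {p a b s t : ℝ} (hp0 : 0 ≤ p) (hp1 : p ≤ 1) (ha : 0 < a)
    (hb : 0 < b) (hab : a + b = 1) (hs : 0 ≤ s) (ht : 0 ≤ t) :
    a ^ (1 - p) * s ^ p + b ^ (1 - p) * t ^ p ≤ (s + t) ^ p := by
  have key : ∀ {c u : ℝ}, 0 < c → 0 ≤ u → c • (u / c) ^ p = c ^ (1 - p) * u ^ p := by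
    intro c u hc hu
    rw [smul_eq_mul, Real.div_rpow hu hc.le, Real.rpow_sub hc, Real.rpow_one]
    ring
  have h := (Real.concaveOn_rpow hp0 hp1).2 (Set.mem_Ici.2 (div_nonneg hs ha.le))
    (Set.mem_Ici.2 (div_nonneg ht hb.le)) ha.le hb.le hab
  rwa [key ha hs, key hb ht, smul_eq_mul, smul_eq_mul, mul_div_cancel₀ _ ha.ne',
    mul_div_cancel₀ _ hb.ne'] at h

section RpowConj

variable {ι : Type*} {G : (ι → ℝ) → ℝ} {p : ℝ}

noncomputable def rpowConj (G : (ι → ℝ) → ℝ) (p : ℝ) (x : ι → ℝ) : ℝ :=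
  G (fun i ↦ x i ^ p) ^ (1 / p)

lemma rpow_pi_nonneg {x : ι → ℝ} (hx : 0 ≤ x) : 0 ≤ fun i ↦ x i ^ p :=
  fun i ↦ Real.rpow_nonneg (hx i) p

lemma rpowConj_nonneg (hG : ∀ x, 0 ≤ x → 0 ≤ G x) {x : ι → ℝ} (hx : 0 ≤ x) :
    0 ≤ rpowConj G p x :=
  Real.rpow_nonneg (hG _ (rpow_pi_nonneg hx)) _

lemma rpowConj_rpow (hp : p ≠ 0) (hG : ∀ x, 0 ≤ x → 0 ≤ G x) {x : ι → ℝ} (hx : 0 ≤ x) :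
    rpowConj G p x ^ p = G (fun i ↦ x i ^ p) := by
  rw [rpowConj, ← Real.rpow_mul (hG _ (rpow_pi_nonneg hx)), one_div_mul_cancel hp, Real.rpow_one]

lemma rpowConj_smul (hp : 0 < p) (hG : ∀ x, 0 ≤ x → 0 ≤ G x)
    (hsmul : ∀ c : ℝ, 0 ≤ c → ∀ x, 0 ≤ x → G (c • x) = c * G x)
    {c : ℝ} (hc : 0 ≤ c) {x : ι → ℝ} (hx : 0 ≤ x) :
    rpowConj G p (c • x) = c * rpowConj G p x := by
  have hpow : (fun i ↦ (c • x) i ^ p) = c ^ p • fun i ↦ x i ^ p := by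
    ext i
    exact Real.mul_rpow hc (hx i)
  rw [rpowConj, hpow, hsmul _ (Real.rpow_nonneg hc p) _ (rpow_pi_nonneg hx),
    Real.mul_rpow (Real.rpow_nonneg hc p) (hG _ (rpow_pi_nonneg hx)), ← Real.rpow_mul hc,
    mul_one_div_cancel hp.ne', Real.rpow_one, rpowConj]

lemma rpowConj_monotoneOn (hp : 0 < p) (hG : ∀ x, 0 ≤ x → 0 ≤ G x)
    (hmono : MonotoneOn G (Set.Ici 0)) : MonotoneOn (rpowConj G p) (Set.Ici 0) := by
  intro x hx y hy hxy
  have hxy' : (fun i ↦ x i ^ p) ≤ fun i ↦ y i ^ p :=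
    fun i ↦ Real.rpow_le_rpow (hx i) (hxy i) hp.le
  exact Real.rpow_le_rpow (hG _ (rpow_pi_nonneg hx))
    (hmono (rpow_pi_nonneg hx) (rpow_pi_nonneg hy) hxy') (by positivity)

lemma rpowConj_add_le (hp0 : 0 < p) (hp1 : p ≤ 1) (hG : ∀ x, 0 ≤ x → 0 ≤ G x)
    (hsmul : ∀ c : ℝ, 0 ≤ c → ∀ x, 0 ≤ x → G (c • x) = c * G x)
    (hadd : ∀ x y, 0 ≤ x → 0 ≤ y → G x + G y ≤ G (x + y)) {x y : ι → ℝ} (hx : 0 ≤ x)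
    (hy : 0 ≤ y) : rpowConj G p x + rpowConj G p y ≤ rpowConj G p (x + y) := by
  have hGmono := monotoneOn_of_add_le hG hadd
  have hmono := rpowConj_monotoneOn hp0 hG hGmono
  have hxy : 0 ≤ x + y := add_nonneg hx hy
  rcases (rpowConj_nonneg (p := p) hG hx).eq_or_lt with ha | ha
  · rw [← ha, zero_add]
    exact hmono hy hxy (le_add_of_nonneg_left hx)
  rcases (rpowConj_nonneg (p := p) hG hy).eq_or_lt with hb | hb
  · rw [← hb, add_zero]
    exact hmono hx hxy (le_add_of_nonneg_right hy)
  set a := rpowConj G p x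
  set b := rpowConj G p y
  have hS : 0 < a + b := add_pos ha hb
  suffices h : (a + b) ^ p ≤ G (fun i ↦ (x + y) i ^ p) by
    calc a + b = ((a + b) ^ p) ^ (1 / p) := by
          rw [← Real.rpow_mul hS.le, mul_one_div_cancel hp0.ne', Real.rpow_one]
      _ ≤ rpowConj G p (x + y) := Real.rpow_le_rpow (by positivity) h (by positivity)
  have hweight : ∀ {c : ℝ}, 0 ≤ c → (c / (a + b)) ^ (1 - p) * c ^ p = c / (a + b) ^ (1 - p) := by
    intro c hc
    rw [Real.div_rpow hc hS.le, div_mul_eq_mul_div, ← Real.rpow_add' hc (by norm_num)]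
    norm_num
  set l := (a / (a + b)) ^ (1 - p)
  set m := (b / (a + b)) ^ (1 - p)
  have hl : 0 ≤ l := by positivity
  have hm : 0 ≤ m := by positivity
  calc (a + b) ^ p = l * a ^ p + m * b ^ p := by
        rw [hweight ha.le, hweight hb.le, ← add_div, Real.rpow_sub hS, Real.rpow_one,
          div_div_cancel₀ hS.ne']
    _ = G (l • fun i ↦ x i ^ p) + G (m • fun i ↦ y i ^ p) := by
        rw [hsmul _ hl _ (rpow_pi_nonneg hx), hsmul _ hm _ (rpow_pi_nonneg hy),
          rpowConj_rpow hp0.ne' hG hx, rpowConj_rpow hp0.ne' hG hy]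
    _ ≤ G ((l • fun i ↦ x i ^ p) + m • fun i ↦ y i ^ p) :=
        hadd _ _ (smul_nonneg hl (rpow_pi_nonneg hx)) (smul_nonneg hm (rpow_pi_nonneg hy))
    _ ≤ G (fun i ↦ (x + y) i ^ p) := by
        refine hGmono ?_ (rpow_pi_nonneg hxy) fun i ↦ ?_
        · exact add_nonneg (smul_nonneg hl (rpow_pi_nonneg hx)) (smul_nonneg hm (rpow_pi_nonneg hy))
        · exact Real.weighted_rpow_add_le hp0.le hp1 (div_pos ha hS) (div_pos hb hS)
            (by rw [← add_div, div_self hS.ne']) (hx i) (hy i)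

theorem concaveOn_rpowConj (hp0 : 0 < p) (hp1 : p ≤ 1) (hG : ∀ x, 0 ≤ x → 0 ≤ G x)
    (hsmul : ∀ c : ℝ, 0 ≤ c → ∀ x, 0 ≤ x → G (c • x) = c * G x)
    (hadd : ∀ x y, 0 ≤ x → 0 ≤ y → G x + G y ≤ G (x + y)) :
    ConcaveOn ℝ (Set.Ici 0) (rpowConj G p) :=
  concaveOn_of_add_le_of_map_smul (convex_Ici 0) (fun _ hx _ hc ↦ Set.mem_Ici.2 (smul_nonneg hc hx))
    (fun _ hx _ hc ↦ rpowConj_smul hp0 hG hsmul hc hx)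
    (fun _ hx _ hy ↦ rpowConj_add_le hp0 hp1 hG hsmul hadd hx hy)

end RpowConj

theorem esymm_ratio_rpow_concave_general (n k : ℕ) (hk1 : 1 ≤ k)
    (p : ℝ) (hp : p ∈ Set.Ioo (0 : ℝ) 1) :
    ConcaveOn ℝ {x : Fin n → ℝ | ∀ i, 0 ≤ x i}
      (fun x =>
        (esymm n k (fun i => x i ^ p) / esymm n (k - 1) (fun i => x i ^ p)) ^ (1 / p)) :=
  concaveOn_rpowConj (G := esymmRatio Finset.univ k) hp.1 hp.2.le
    (fun _ hx ↦ esymmRatio_nonneg hx) (fun c _ _ _ ↦ esymmRatio_smul c hk1)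
    (fun _ _ hx hy ↦ esymmRatio_add_le hx hy hk1)

/-- Let `1 ≤ k ≤ n` and `p ∈ (0, 1)`. The function
`φ_{k,n}(x) = (e_k(x^p) / e_{k-1}(x^p))^(1/p)` is concave on the nonnegative orthant. -/
theorem esymm_ratio_rpow_concave (n k : ℕ) (hk1 : 1 ≤ k) (hkn : k ≤ n)
    (p : ℝ) (hp : p ∈ Set.Ioo (0 : ℝ) 1) :
    ConcaveOn ℝ {x : Fin n → ℝ | ∀ i, 0 ≤ x i}
      (fun x =>
        (esymm n k (fun i => x i ^ p) / esymm n (k - 1) (fun i => x i ^ p)) ^ (1 / p)) :=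
  esymm_ratio_rpow_concave_general n k hk1 p hp
end

section
/- For every real p > 0, the multivariate p-parallel sum map x ↦ (x₁^(-p) + x₂^(-p) + ⋯ + xₙ^(-p))^(-1/p) is concave on the positive orthant (0, ∞)ⁿ. -/
/-!
For positive weights `w` with `∑ wᵢ = 1`, Jensen's inequality for the convex function
`t ↦ t^(-p)` at the points `wᵢ^(1/p) xᵢ` gives `(∑ xᵢ^(-p))^(-1/p) ≤ ∑ wᵢ^(1 + 1/p) xᵢ`, with
equality at `x = z` for `wᵢ ∝ zᵢ^(-p)`. So the parallel sum is a minimum of linear forms that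
is attained at every point, hence concave.
-/

open Finset Real Set

theorem concaveOn_of_forall_le_of_eq {𝕜 E β : Type*} [Semiring 𝕜] [PartialOrder 𝕜]
    [AddCommMonoid E] [AddCommMonoid β] [PartialOrder β] [IsOrderedAddMonoid β] [SMul 𝕜 E]
    [Module 𝕜 β] [PosSMulMono 𝕜 β] {s : Set E} {f : E → β} (g : E → E → β)
    (hs : Convex 𝕜 s) (hg : ∀ z ∈ s, ConcaveOn 𝕜 s (g z)) (hle : ∀ z ∈ s, ∀ x ∈ s, f x ≤ g z x)
    (heq : ∀ z ∈ s, g z z = f z) : ConcaveOn 𝕜 s f := by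
  refine ⟨hs, fun x hx y hy a b ha hb hab => ?_⟩
  have hz := hs hx hy ha hb hab
  calc a • f x + b • f y
      ≤ a • g _ x + b • g _ y := add_le_add (smul_le_smul_of_nonneg_left (hle _ hz x hx) ha)
        (smul_le_smul_of_nonneg_left (hle _ hz y hy) hb)
    _ ≤ g _ (a • x + b • y) := (hg _ hz).2 hx hy ha hb hab
    _ = f (a • x + b • y) := heq _ hz

theorem convexOn_rpow_of_nonpos {r : ℝ} (hr : r ≤ 0) :
    ConvexOn ℝ (Ioi 0) fun x : ℝ => x ^ r := by
  set h : ℝ → ℝ := fun x => log x * r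
  have hh : ConvexOn ℝ (Ioi 0) h :=
    ((strictConcaveOn_log_Ioi.concaveOn.smul (neg_nonneg.2 hr)).neg).congr fun x _ => by
      simp only [h, Pi.neg_apply, smul_eq_mul]; ring
  have himage : Convex ℝ (h '' Ioi 0) :=
    (isPreconnected_Ioi.image h ((continuousOn_log.mono fun x hx => ne_of_gt hx).mul
      continuousOn_const)).convex
  exact ((convexOn_exp.subset (subset_univ _) himage).comp hh
    (Real.exp_monotone.monotoneOn _)).congr fun x hx => (rpow_def_of_pos hx r).symm

noncomputable def powParallelSum {ι : Type*} [Fintype ι] (p : ℝ) (x : ι → ℝ) : ℝ :=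
  (∑ i, x i ^ (-p)) ^ (-1 / p)

def positiveOrthant (ι : Type*) : Set (ι → ℝ) := {x | ∀ i, 0 < x i}

theorem convex_positiveOrthant {ι : Type*} : Convex ℝ (positiveOrthant ι) := by
  simpa [positiveOrthant, Set.pi] using convex_pi (s := univ) fun (_ : ι) _ => convex_Ioi (0 : ℝ)

variable {ι : Type*} [Fintype ι] {p : ℝ}

theorem concaveOn_weightedSum (c : ι → ℝ) {s : Set (ι → ℝ)} (hs : Convex ℝ s) :
    ConcaveOn ℝ s fun x => ∑ i, c i * x i :=
  (Fintype.linearCombination ℝ c).concaveOn hs |>.congr fun x _ => by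
    simp [Fintype.linearCombination_apply, mul_comm]

theorem powParallelSum_le (hp : 0 < p) {w x : ι → ℝ} (hw : ∀ i, 0 < w i) (hw1 : ∑ i, w i = 1)
    (hx : ∀ i, 0 < x i) : powParallelSum p x ≤ ∑ i, w i ^ (1 + 1 / p) * x i := by
  set y : ι → ℝ := fun i => w i ^ (1 / p) * x i
  have hy : ∀ i, 0 < y i := fun i => mul_pos (rpow_pos_of_pos (hw i) _) (hx i)
  have hA : 0 < ∑ i, w i * y i :=
    sum_pos (fun i _ => mul_pos (hw i) (hy i)) (nonempty_of_sum_ne_zero (hw1 ▸ one_ne_zero))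
  have hjensen := (convexOn_rpow_of_nonpos (neg_nonpos.2 hp.le)).map_sum_le
    (t := univ) (fun i _ => (hw i).le) hw1 (fun i _ => hy i)
  have hterm : ∀ i, w i • y i ^ (-p) = x i ^ (-p) := fun i => by
    rw [smul_eq_mul, mul_rpow (rpow_nonneg (hw i).le _) (hx i).le, ← rpow_mul (hw i).le,
      show 1 / p * -p = -1 by field_simp, rpow_neg_one]
    field_simp [(hw i).ne']
  simp only [hterm, smul_eq_mul] at hjensen
  calc powParallelSum p x ≤ ((∑ i, w i * y i) ^ (-p)) ^ (-1 / p) :=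
        rpow_le_rpow_of_nonpos (rpow_pos_of_pos hA _) hjensen
          (div_nonpos_of_nonpos_of_nonneg (by norm_num) hp.le)
    _ = ∑ i, w i * y i := by rw [← rpow_mul hA.le]; field_simp; simp
    _ = ∑ i, w i ^ (1 + 1 / p) * x i := by
        refine sum_congr rfl fun i _ => ?_
        rw [rpow_add (hw i), rpow_one, mul_assoc]

noncomputable def parallelSumWeight (p : ℝ) (z : ι → ℝ) (i : ι) : ℝ :=
  z i ^ (-p) / ∑ j, z j ^ (-p)

section Nonempty

variable [Nonempty ι] {z : ι → ℝ}

theorem sum_rpow_neg_pos (hz : ∀ i, 0 < z i) : 0 < ∑ i, z i ^ (-p) :=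
  sum_pos (fun i _ => rpow_pos_of_pos (hz i) _) univ_nonempty

theorem parallelSumWeight_pos (hz : ∀ i, 0 < z i) (i : ι) : 0 < parallelSumWeight p z i :=
  div_pos (rpow_pos_of_pos (hz i) _) (sum_rpow_neg_pos hz)

theorem sum_parallelSumWeight (hz : ∀ i, 0 < z i) : ∑ i, parallelSumWeight p z i = 1 := by
  simp only [parallelSumWeight]
  rw [← sum_div, div_self (sum_rpow_neg_pos hz).ne']

theorem sum_parallelSumWeight_rpow_mul_self (hp : 0 < p) (hz : ∀ i, 0 < z i) :
    ∑ i, parallelSumWeight p z i ^ (1 + 1 / p) * z i = powParallelSum p z := by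
  set S := ∑ i, z i ^ (-p)
  have hS : 0 < S := sum_rpow_neg_pos hz
  have hterm : ∀ i, parallelSumWeight p z i ^ (1 + 1 / p) * z i =
      parallelSumWeight p z i * S ^ (-1 / p) := fun i => by
    have hzi := hz i
    rw [rpow_one_add' (parallelSumWeight_pos hz i).le (by positivity), mul_assoc,
      parallelSumWeight, div_rpow (rpow_nonneg hzi.le _) hS.le, ← rpow_mul hzi.le,
      show -p * (1 / p) = -1 by field_simp, rpow_neg_one, neg_div, rpow_neg hS.le]
    field_simp
  rw [sum_congr rfl fun i _ => hterm i, ← sum_mul, sum_parallelSumWeight hz, one_mul]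
  rfl

end Nonempty

theorem concaveOn_powParallelSum (hp : 0 < p) :
    ConcaveOn ℝ (positiveOrthant ι) (powParallelSum p) := by
  cases isEmpty_or_nonempty ι
  · exact (concaveOn_const (0 ^ (-1 / p)) convex_positiveOrthant).congr fun x _ => by
      simp [powParallelSum]
  exact concaveOn_of_forall_le_of_eq
    (fun z x => ∑ i, parallelSumWeight p z i ^ (1 + 1 / p) * x i) convex_positiveOrthant
    (fun z _ => concaveOn_weightedSum _ convex_positiveOrthant)
    (fun z hz x hx =>
      powParallelSum_le hp (parallelSumWeight_pos hz) (sum_parallelSumWeight hz) hx)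
    (fun z hz => sum_parallelSumWeight_rpow_mul_self hp hz)

/-- For every real `p > 0`, the multivariate `p`-parallel sum
`x ↦ (x₁^(-p) + ⋯ + xₙ^(-p))^(-1/p)` is concave on the positive orthant. -/
theorem multivariate_parallel_sum_concave (n : ℕ) (p : ℝ) (hp : 0 < p) :
    ConcaveOn ℝ {x : Fin n → ℝ | ∀ i, 0 < x i}
      (fun x => (∑ i, x i ^ (-p)) ^ (-1 / p)) :=
  concaveOn_powParallelSum hp
end

section
/- Let x, y ∈ ℝ₊ⁿ, p ≥ 1, and let k ≥ 2 be an integer. Then (h_k((x+y)^p) / h_1((x+y)^p))^(1/(p(k-1))) ≤ (h_k(x^p) / h_1(x^p))^(1/(p(k-1))) + (h_k(y^p) / h_1(y^p))^(1/(p(k-1))), where all quantities are interpreted on vectors with h_1 > 0 (e.g., x, y nonzero). -/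
/-!
If `Z` has independent `Exp(1)` coordinates then `E ∏ Zᵢ^{cᵢ} = ∏ cᵢ!`, and the multinomial
theorem gives `k! h_k(x) = E ⟨x, Z⟩^k` for `x ≥ 0`. Minkowski's inequality in `L^k` therefore makes
`h_k^{1/k}` subadditive, hence `h_k` convex on the orthant; the same representation, with `Zⱼ`
inserted, yields `h_{k+1} ≤ h_1 h_k` and `h_{k+1}(w + d) ≥ h_{k+1}(w) + h_k(w) h_1(d)`, which
together make `h_{k+1}/h_1` monotone.

The function `N(x) = (h_k(x^p)/h_1(x^p))^{1/(p(k-1))}` is positively homogeneous of degree one, so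
it is subadditive once its unit ball is convex. If `h_k ≤ h_1` at `x^p` and at `y^p`, then
`(ax + by)^p ≤ a x^p + b y^p` and monotonicity reduce `h_k ≤ h_1` at `(ax + by)^p` to the same
inequality at `a x^p + b y^p`, which follows from convexity of `h_k` and linearity of `h_1`.
-/

/-- The `k`-th complete homogeneous symmetric polynomial of `x ∈ ℝⁿ`:
the sum of all monomials `x_{i₁} x_{i₂} ⋯ x_{i_k}` with `1 ≤ i₁ ≤ ⋯ ≤ i_k ≤ n`. -/
noncomputable def hsymm (n k : ℕ) (x : Fin n → ℝ) : ℝ :=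
  ∑ m ∈ (Finset.univ : Finset (Fin n)).sym k, (m.1.map x).prod

open MeasureTheory ProbabilityTheory Finset
open scoped ENNReal Nat

lemma Multiset.prod_map_eq_prod_pow_count {α M : Type*} [DecidableEq α] [Fintype α] [CommMonoid M]
    (m : Multiset α) (f : α → M) : (m.map f).prod = ∏ a, f a ^ m.count a := by
  rw [prod_multiset_map_count]
  exact prod_subset (subset_univ _) fun a _ ha => by
    rw [Multiset.count_eq_zero.2 fun h => ha (Multiset.mem_toFinset.2 h), pow_zero]

lemma Multiset.countPerms_mul_prod_factorial_count {α : Type*} [DecidableEq α] [Fintype α]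
    (m : Multiset α) : m.countPerms * ∏ a, (m.count a)! = (Multiset.card m)! := by
  have hsupp : ∏ a, (m.count a)! = ∏ a ∈ m.toFinset, (m.count a)! :=
    (prod_subset (subset_univ _) fun a _ ha => by
      rw [Multiset.count_eq_zero.2 fun h => ha (Multiset.mem_toFinset.2 h),
        Nat.factorial_zero]).symm
  have hmult : m.countPerms = Nat.multinomial m.toFinset m.count := by
    rw [Multiset.countPerms, Finsupp.multinomial_eq, Multiset.toFinsupp_support]
    exact Nat.multinomial_congr fun a _ => Multiset.toFinsupp_apply m a
  rw [hmult, hsupp, mul_comm, Nat.multinomial_spec, Multiset.toFinset_sum_count_eq]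

lemma prod_factorial_add_single {ι : Type*} [Fintype ι] [DecidableEq ι] (c : ι → ℕ) (j : ι) :
    ∏ i, (c i + (Pi.single j 1 : ι → ℕ) i)! = (c j + 1) * ∏ i, (c i)! := by
  rw [← mul_prod_erase univ _ (mem_univ j), ← mul_prod_erase univ (fun i => (c i)!) (mem_univ j),
    Pi.single_eq_same, Nat.factorial_succ, mul_assoc]
  congr 2
  exact prod_congr rfl fun i hi => by rw [Pi.single_eq_of_ne (ne_of_mem_erase hi), add_zero]

lemma ENNReal.pow_succ_add_mul_pow_mul_le (a b : ℝ≥0∞) (k : ℕ) :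
    a ^ (k + 1) + (k + 1) * (a ^ k * b) ≤ (a + b) ^ (k + 1) := by
  rw [add_pow, sum_range_succ, sum_range_succ, add_assoc]
  refine le_trans (le_of_eq ?_) le_add_self
  simp only [Nat.choose_succ_self_right, Nat.choose_self, add_tsub_cancel_left, tsub_self]
  push_cast
  ring

instance : IsProbabilityMeasure (expMeasure 1) := isProbabilityMeasure_expMeasure one_pos

-- `t ^ c e^{-t}` is `c!` times the density of `Γ(c + 1, 1)`.
lemma lintegral_ofReal_pow_expMeasure_one (c : ℕ) :
    ∫⁻ t, ENNReal.ofReal t ^ c ∂expMeasure 1 = c ! := by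
  have hdens (t : ℝ) : gammaPDF 1 1 t * ENNReal.ofReal t ^ c = c ! * gammaPDF (c + 1) 1 t := by
    rcases lt_or_ge t 0 with ht | ht
    · simp [gammaPDF_of_neg ht]
    · have hΓ : Real.Gamma (c + 1) = c ! := Real.Gamma_nat_eq_factorial c
      rw [gammaPDF_of_nonneg ht, gammaPDF_of_nonneg ht, ← ENNReal.ofReal_pow ht,
        ← ENNReal.ofReal_natCast, ← ENNReal.ofReal_mul (by positivity),
        ← ENNReal.ofReal_mul (by positivity), hΓ]
      congr 1
      have : (c ! : ℝ) ≠ 0 := by positivity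
      simp only [Real.one_rpow, Real.Gamma_one, add_sub_cancel_right, Real.rpow_natCast, sub_self,
        Real.rpow_zero]
      field_simp
  have hmeas (a : ℝ) : Measurable (gammaPDF a 1) := (measurable_gammaPDFReal a 1).ennreal_ofReal
  rw [expMeasure, gammaMeasure, lintegral_withDensity_eq_lintegral_mul _ (hmeas 1) (by fun_prop)]
  simp only [Pi.mul_apply, hdens]
  rw [lintegral_const_mul _ (hmeas _),
    lintegral_gammaPDF_eq_one (by positivity) one_pos, mul_one]

lemma lintegral_prod_pow_pi_expMeasure_one {ι : Type*} [Fintype ι] (a : ι → ℕ) :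
    ∫⁻ z, ∏ i, ENNReal.ofReal (z i) ^ a i ∂Measure.pi (fun _ : ι => expMeasure 1)
      = ∏ i, ((a i)! : ℝ≥0∞) := by
  have hindep := iIndepFun_pi (μ := fun _ : ι => expMeasure 1)
    (X := fun i t => ENNReal.ofReal t ^ a i) fun i => by fun_prop
  rw [lintegral_prod_eq_prod_lintegral_of_indepFun univ _ hindep fun i => by fun_prop]
  refine prod_congr rfl fun i _ => ?_
  rw [← lintegral_ofReal_pow_expMeasure_one,
    ← (measurePreserving_eval (fun _ : ι => expMeasure 1) i).lintegral_comp (by fun_prop)]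

lemma hsymm_eq_sum_prod_pow {n k : ℕ} (x : Fin n → ℝ) :
    hsymm n k x = ∑ m ∈ univ.sym k, ∏ i, x i ^ m.1.count i :=
  sum_congr rfl fun _ _ => Multiset.prod_map_eq_prod_pow_count _ _

lemma hsymm_nonneg {n k : ℕ} {x : Fin n → ℝ} (hx : 0 ≤ x) : 0 ≤ hsymm n k x := by
  rw [hsymm_eq_sum_prod_pow]
  exact sum_nonneg fun m _ => prod_nonneg fun i _ => pow_nonneg (hx i) _

lemma hsymm_pos {n k : ℕ} {x : Fin n → ℝ} (hx : 0 ≤ x) {i : Fin n} (hi : 0 < x i) :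
    0 < hsymm n k x := by
  refine sum_pos' (fun m _ => Multiset.prod_nonneg fun b hb => ?_) ⟨Sym.replicate k i, by simp, ?_⟩
  · obtain ⟨j, _, rfl⟩ := Multiset.mem_map.1 hb
    exact hx j
  · simpa [Sym.replicate] using pow_pos hi k

lemma hsymm_one {n : ℕ} (x : Fin n → ℝ) : hsymm n 1 x = ∑ i, x i := by
  rw [hsymm, sym_univ]
  exact (Fintype.sum_equiv Sym.oneEquiv _ _ fun i => by
    change x i = (({i} : Multiset (Fin n)).map x).prod
    simp).symm

lemma hsymm_const_mul {n k : ℕ} (c : ℝ) (x : Fin n → ℝ) :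
    hsymm n k (fun i => c * x i) = c ^ k * hsymm n k x := by
  simp only [hsymm, mul_sum, Multiset.prod_map_mul, Multiset.map_const', Multiset.prod_replicate]
  exact sum_congr rfl fun m _ => by rw [m.2]

lemma ofReal_hsymm {n k : ℕ} {x : Fin n → ℝ} (hx : 0 ≤ x) :
    ENNReal.ofReal (hsymm n k x) = ∑ m ∈ univ.sym k, ∏ i, ENNReal.ofReal (x i) ^ m.1.count i := by
  rw [hsymm_eq_sum_prod_pow, ENNReal.ofReal_sum_of_nonneg fun m _ =>
    prod_nonneg fun i _ => pow_nonneg (hx i) _]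
  refine sum_congr rfl fun m _ => ?_
  rw [ENNReal.ofReal_prod_of_nonneg fun i _ => pow_nonneg (hx i) _]
  exact prod_congr rfl fun i _ => ENNReal.ofReal_pow (hx i) _

-- `⟨x, z⟩` on the nonnegative orthant (`ofReal` truncates negative coordinates), valued in `ℝ≥0∞`
-- so that Minkowski's inequality needs no integrability side conditions.
noncomputable def ennDot {n : ℕ} (x z : Fin n → ℝ) : ℝ≥0∞ :=
  ∑ i, ENNReal.ofReal (x i) * ENNReal.ofReal (z i)

noncomputable abbrev expPi (n : ℕ) : Measure (Fin n → ℝ) := Measure.pi fun _ => expMeasure 1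

section ennDot

variable {n : ℕ}

@[fun_prop]
lemma measurable_ennDot (x : Fin n → ℝ) : Measurable (ennDot x) := by
  unfold ennDot; fun_prop

lemma ennDot_add {x y : Fin n → ℝ} (hx : 0 ≤ x) (hy : 0 ≤ y) (z : Fin n → ℝ) :
    ennDot (x + y) z = ennDot x z + ennDot y z := by
  simp only [ennDot, ← sum_add_distrib, Pi.add_apply, ENNReal.ofReal_add (hx _) (hy _), add_mul]

lemma lintegral_ennDot_pow_mul_prod_pow (x : Fin n → ℝ) (r : ℕ) (a : Fin n → ℕ) :
    ∫⁻ z, ennDot x z ^ r * ∏ i, ENNReal.ofReal (z i) ^ a i ∂expPi n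
      = ∑ m ∈ univ.sym r, m.1.countPerms * (∏ i, ENNReal.ofReal (x i) ^ m.1.count i)
          * ∏ i, ((m.1.count i + a i)! : ℝ≥0∞) := by
  have hexpand (z : Fin n → ℝ) : ennDot x z ^ r * ∏ i, ENNReal.ofReal (z i) ^ a i
      = ∑ m ∈ univ.sym r, m.1.countPerms * (∏ i, ENNReal.ofReal (x i) ^ m.1.count i)
          * ∏ i, ENNReal.ofReal (z i) ^ (m.1.count i + a i) := by
    rw [ennDot, sum_pow, sum_mul]
    refine sum_congr rfl fun m _ => ?_
    simp only [Multiset.prod_map_eq_prod_pow_count, mul_pow, pow_add, prod_mul_distrib]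
    ring
  simp only [hexpand]
  rw [lintegral_finsetSum _ fun m _ => by fun_prop]
  refine sum_congr rfl fun m _ => ?_
  rw [lintegral_const_mul _ (by fun_prop), lintegral_prod_pow_pi_expMeasure_one]

lemma lintegral_ennDot_pow {x : Fin n → ℝ} (hx : 0 ≤ x) (r : ℕ) :
    ∫⁻ z, ennDot x z ^ r ∂expPi n = r ! * ENNReal.ofReal (hsymm n r x) := by
  have h := lintegral_ennDot_pow_mul_prod_pow x r 0
  simp only [Pi.zero_apply, pow_zero, prod_const_one, mul_one, add_zero] at h
  rw [h, ofReal_hsymm hx, mul_sum]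
  refine sum_congr rfl fun m _ => ?_
  rw [mul_right_comm, ← Nat.cast_prod, ← Nat.cast_mul,
    Multiset.countPerms_mul_prod_factorial_count, m.2, mul_comm]

lemma lintegral_ennDot_pow_mul_mem_Icc {x : Fin n → ℝ} (hx : 0 ≤ x) (r : ℕ) (j : Fin n) :
    ∫⁻ z, ennDot x z ^ r * ENNReal.ofReal (z j) ∂expPi n ∈
      Set.Icc (r ! * ENNReal.ofReal (hsymm n r x)) ((r + 1)! * ENNReal.ofReal (hsymm n r x)) := by
  have h := lintegral_ennDot_pow_mul_prod_pow x r (Pi.single j 1)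
  have hsingle (z : Fin n → ℝ) :
      ∏ i, ENNReal.ofReal (z i) ^ (Pi.single j 1 : Fin n → ℕ) i = ENNReal.ofReal (z j) := by
    rw [Fintype.prod_eq_single j fun i hi => by rw [Pi.single_eq_of_ne hi, pow_zero],
      Pi.single_eq_same, pow_one]
  have hterm (m : Sym (Fin n) r) :
      (m.1.countPerms : ℝ≥0∞) * (∏ i, ENNReal.ofReal (x i) ^ m.1.count i)
        * ∏ i, ((m.1.count i + (Pi.single j 1 : Fin n → ℕ) i)! : ℝ≥0∞)
      = (m.1.count j + 1 : ℕ) * (r ! * ∏ i, ENNReal.ofReal (x i) ^ m.1.count i) := by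
    rw [← Nat.cast_prod, prod_factorial_add_single,
      ← (Multiset.countPerms_mul_prod_factorial_count m.1).trans (congrArg Nat.factorial m.2)]
    push_cast
    ring
  simp only [hsingle, hterm] at h
  rw [h, ofReal_hsymm hx, mul_sum, mul_sum]
  constructor
  · exact sum_le_sum fun m _ => le_mul_of_one_le_left' (by exact_mod_cast Nat.le_add_left 1 _)
  · refine sum_le_sum fun m _ => ?_
    rw [Nat.factorial_succ, Nat.cast_mul, mul_assoc]
    gcongr
    exact_mod_cast m.2 ▸ Multiset.count_le_card j m.1

lemma lintegral_ennDot_pow_mul_ennDot_mem_Icc {x d : Fin n → ℝ} (hx : 0 ≤ x) (hd : 0 ≤ d)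
    (r : ℕ) :
    ∫⁻ z, ennDot x z ^ r * ennDot d z ∂expPi n ∈
      Set.Icc (r ! * ENNReal.ofReal (hsymm n r x) * ENNReal.ofReal (hsymm n 1 d))
        ((r + 1)! * ENNReal.ofReal (hsymm n r x) * ENNReal.ofReal (hsymm n 1 d)) := by
  have hsplit (z : Fin n → ℝ) : ennDot x z ^ r * ennDot d z
      = ∑ j, ENNReal.ofReal (d j) * (ennDot x z ^ r * ENNReal.ofReal (z j)) := by
    have hd_dot : ennDot d z = ∑ j, ENNReal.ofReal (d j) * ENNReal.ofReal (z j) := rfl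
    rw [hd_dot, mul_sum]
    exact sum_congr rfl fun j _ => by ring
  have hd1 : ENNReal.ofReal (hsymm n 1 d) = ∑ j, ENNReal.ofReal (d j) := by
    rw [hsymm_one, ENNReal.ofReal_sum_of_nonneg fun j _ => hd j]
  simp only [hsplit]
  rw [lintegral_finsetSum _ fun j _ => by fun_prop, hd1, mul_sum, mul_sum]
  have hI (j : Fin n) := lintegral_ennDot_pow_mul_mem_Icc hx r j
  constructor <;> refine sum_le_sum fun j _ => ?_ <;>
    rw [lintegral_const_mul _ (by fun_prop), mul_comm (ENNReal.ofReal (d j))] <;> gcongr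
  exacts [(hI j).1, (hI j).2]

lemma hsymm_succ_le_hsymm_one_mul {x : Fin n → ℝ} (hx : 0 ≤ x) (k : ℕ) :
    hsymm n (k + 1) x ≤ hsymm n 1 x * hsymm n k x := by
  have h := (lintegral_ennDot_pow_mul_ennDot_mem_Icc hx hx k).2
  simp only [← pow_succ] at h
  rw [lintegral_ennDot_pow hx, mul_assoc, ENNReal.mul_le_mul_iff_right (by positivity) (by simp),
    ← ENNReal.ofReal_mul (hsymm_nonneg hx),
    ENNReal.ofReal_le_ofReal_iff (mul_nonneg (hsymm_nonneg hx) (hsymm_nonneg hx))] at h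
  linarith

lemma hsymm_succ_add_mul_hsymm_one_le {w d : Fin n → ℝ} (hw : 0 ≤ w) (hd : 0 ≤ d) (k : ℕ) :
    hsymm n (k + 1) w + hsymm n k w * hsymm n 1 d ≤ hsymm n (k + 1) (w + d) := by
  have hpoint (z : Fin n → ℝ) :
      ennDot w z ^ (k + 1) + (k + 1) * (ennDot w z ^ k * ennDot d z)
        ≤ ennDot (w + d) z ^ (k + 1) := by
    rw [ennDot_add hw hd]
    exact ENNReal.pow_succ_add_mul_pow_mul_le _ _ k
  have hupper := lintegral_mono (μ := expPi n) hpoint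
  rw [lintegral_add_left (by fun_prop), lintegral_const_mul _ (by fun_prop),
    lintegral_ennDot_pow hw, lintegral_ennDot_pow (add_nonneg hw hd)] at hupper
  have hlower :=
    mul_le_mul_right (lintegral_ennDot_pow_mul_ennDot_mem_Icc hw hd k).1 ((k : ℝ≥0∞) + 1)
  have h : ((k + 1)! : ℝ≥0∞) * ENNReal.ofReal (hsymm n (k + 1) w + hsymm n k w * hsymm n 1 d)
      ≤ (k + 1)! * ENNReal.ofReal (hsymm n (k + 1) (w + d)) := by
    rw [ENNReal.ofReal_add (hsymm_nonneg hw) (mul_nonneg (hsymm_nonneg hw) (hsymm_nonneg hd)),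
      ENNReal.ofReal_mul (hsymm_nonneg hw)]
    refine le_trans (le_of_eq ?_) ((add_le_add_right hlower _).trans hupper)
    push_cast [Nat.factorial_succ]
    ring
  rwa [ENNReal.mul_le_mul_iff_right (by positivity) (by simp),
    ENNReal.ofReal_le_ofReal_iff (hsymm_nonneg (add_nonneg hw hd))] at h

lemma hsymm_add_rpow_inv_le {k : ℕ} (hk : 1 ≤ k) {x y : Fin n → ℝ} (hx : 0 ≤ x) (hy : 0 ≤ y) :
    hsymm n k (x + y) ^ (k : ℝ)⁻¹ ≤ hsymm n k x ^ (k : ℝ)⁻¹ + hsymm n k y ^ (k : ℝ)⁻¹ := by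
  have hk0 : (0 : ℝ) ≤ (k : ℝ)⁻¹ := by positivity
  have hX := Real.rpow_nonneg (hsymm_nonneg (k := k) hx) (k : ℝ)⁻¹
  have hY := Real.rpow_nonneg (hsymm_nonneg (k := k) hy) (k : ℝ)⁻¹
  have h := ENNReal.lintegral_Lp_add_le (μ := expPi n) (measurable_ennDot x).aemeasurable
    (measurable_ennDot y).aemeasurable (p := k) (by exact_mod_cast hk)
  simp only [← ennDot_add hx hy, Pi.add_apply, ENNReal.rpow_natCast, lintegral_ennDot_pow, hx, hy,
    add_nonneg hx hy, one_div, ENNReal.mul_rpow_of_nonneg _ _ hk0, ← mul_add] at h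
  rwa [ENNReal.mul_le_mul_iff_right (by positivity) (by simp),
    ENNReal.ofReal_rpow_of_nonneg (hsymm_nonneg (add_nonneg hx hy)) hk0,
    ENNReal.ofReal_rpow_of_nonneg (hsymm_nonneg hx) hk0,
    ENNReal.ofReal_rpow_of_nonneg (hsymm_nonneg hy) hk0,
    ← ENNReal.ofReal_add hX hY, ENNReal.ofReal_le_ofReal_iff (add_nonneg hX hY)] at h

end ennDot

section Convexity

variable {n : ℕ}

lemma convexOn_hsymm {k : ℕ} (hk : 1 ≤ k) : ConvexOn ℝ (Set.Ici 0) (hsymm n k) := by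
  refine ⟨convex_Ici 0, fun u hu v hv a b ha hb hab => ?_⟩
  have hk0 : k ≠ 0 := by omega
  have hroot_smul {c : ℝ} (hc : 0 ≤ c) {x : Fin n → ℝ} (hx : 0 ≤ x) :
      hsymm n k (c • x) ^ (k : ℝ)⁻¹ = c * hsymm n k x ^ (k : ℝ)⁻¹ := by
    rw [show c • x = fun i => c * x i from rfl, hsymm_const_mul,
      Real.mul_rpow (pow_nonneg hc k) (hsymm_nonneg hx), Real.pow_rpow_inv_natCast hc hk0]
  have hroot_nonneg {x : Fin n → ℝ} (hx : 0 ≤ x) : 0 ≤ hsymm n k x ^ (k : ℝ)⁻¹ :=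
    Real.rpow_nonneg (hsymm_nonneg hx) _
  have hsum_nonneg : 0 ≤ a • u + b • v := add_nonneg (smul_nonneg ha hu) (smul_nonneg hb hv)
  calc hsymm n k (a • u + b • v)
      = (hsymm n k (a • u + b • v) ^ (k : ℝ)⁻¹) ^ k :=
        (Real.rpow_inv_natCast_pow (hsymm_nonneg hsum_nonneg) hk0).symm
    _ ≤ (a * hsymm n k u ^ (k : ℝ)⁻¹ + b * hsymm n k v ^ (k : ℝ)⁻¹) ^ k := by
        rw [← hroot_smul ha hu, ← hroot_smul hb hv]
        exact pow_le_pow_left₀ (hroot_nonneg hsum_nonneg)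
          (hsymm_add_rpow_inv_le hk (smul_nonneg ha hu) (smul_nonneg hb hv)) k
    _ ≤ a * (hsymm n k u ^ (k : ℝ)⁻¹) ^ k + b * (hsymm n k v ^ (k : ℝ)⁻¹) ^ k :=
        (convexOn_pow k).2 (hroot_nonneg hu) (hroot_nonneg hv) ha hb hab
    _ = a * hsymm n k u + b * hsymm n k v := by
        rw [Real.rpow_inv_natCast_pow (hsymm_nonneg hu) hk0,
          Real.rpow_inv_natCast_pow (hsymm_nonneg hv) hk0]

lemma hsymm_div_hsymm_one_le_of_le {w z : Fin n → ℝ} (hw : 0 ≤ w) (hwz : w ≤ z) (k : ℕ) :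
    hsymm n (k + 1) w / hsymm n 1 w ≤ hsymm n (k + 1) z / hsymm n 1 z := by
  obtain ⟨d, hd, rfl⟩ : ∃ d, 0 ≤ d ∧ z = w + d := ⟨z - w, sub_nonneg.2 hwz, by abel⟩
  have hone_add : hsymm n 1 (w + d) = hsymm n 1 w + hsymm n 1 d := by
    simp only [hsymm_one, Pi.add_apply, sum_add_distrib]
  have hd1 := hsymm_nonneg (k := 1) hd
  rcases (hsymm_nonneg (k := 1) hw).eq_or_lt with hw1 | hw1
  · rw [← hw1, div_zero]
    exact div_nonneg (hsymm_nonneg (add_nonneg hw hd)) (hsymm_nonneg (add_nonneg hw hd))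
  rw [div_le_div_iff₀ hw1 (by linarith), hone_add]
  have hrec := mul_le_mul_of_nonneg_left (hsymm_succ_add_mul_hsymm_one_le hw hd k) hw1.le
  have hsub := mul_le_mul_of_nonneg_right (hsymm_succ_le_hsymm_one_mul hw k) hd1
  nlinarith

lemma hsymm_div_hsymm_one_rpow_convexComb_le_one {k : ℕ} (hk : 1 ≤ k) {p : ℝ} (hp : 1 ≤ p)
    {x y : Fin n → ℝ} (hx : 0 ≤ x) (hy : 0 ≤ y)
    (hxk : hsymm n k (fun i => x i ^ p) ≤ hsymm n 1 (fun i => x i ^ p))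
    (hyk : hsymm n k (fun i => y i ^ p) ≤ hsymm n 1 (fun i => y i ^ p))
    {a b : ℝ} (ha : 0 ≤ a) (hb : 0 ≤ b) (hab : a + b = 1) :
    hsymm n k (fun i => (a • x + b • y) i ^ p) / hsymm n 1 (fun i => (a • x + b • y) i ^ p)
      ≤ 1 := by
  obtain ⟨k, rfl⟩ := Nat.exists_eq_add_of_le' hk
  set u : Fin n → ℝ := fun i => x i ^ p
  set v : Fin n → ℝ := fun i => y i ^ p
  have hu : 0 ≤ u := fun i => Real.rpow_nonneg (hx i) p
  have hv : 0 ≤ v := fun i => Real.rpow_nonneg (hy i) p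
  have hwz : (fun i => (a • x + b • y) i ^ p) ≤ a • u + b • v := fun i =>
    (convexOn_rpow hp).2 (hx i) (hy i) ha hb hab
  refine (hsymm_div_hsymm_one_le_of_le (fun i => Real.rpow_nonneg ?_ p) hwz k).trans
    (div_le_one_of_le₀ ?_ (hsymm_nonneg (add_nonneg (smul_nonneg ha hu) (smul_nonneg hb hv))))
  · exact add_nonneg (mul_nonneg ha (hx i)) (mul_nonneg hb (hy i))
  calc hsymm n (k + 1) (a • u + b • v) ≤ a * hsymm n (k + 1) u + b * hsymm n (k + 1) v :=
        (convexOn_hsymm hk).2 hu hv ha hb hab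
    _ ≤ a * hsymm n 1 u + b * hsymm n 1 v := by gcongr
    _ = hsymm n 1 (a • u + b • v) := by
        simp only [hsymm_one, Pi.add_apply, Pi.smul_apply, smul_eq_mul, sum_add_distrib, mul_sum]

end Convexity

theorem map_add_le_add_of_homogeneous_of_convexComb_le_one {E : Type*} [AddCommGroup E]
    [Module ℝ E] {S : Set E} (hS : Convex ℝ S) (hS_smul : ∀ c : ℝ, 0 < c → ∀ x ∈ S, c • x ∈ S)
    {N : E → ℝ}
    (hN_smul : ∀ c : ℝ, 0 < c → ∀ x ∈ S, N (c • x) = c * N x)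
    (hN_comb : ∀ x ∈ S, ∀ y ∈ S, N x = 1 → N y = 1 →
      ∀ a b : ℝ, 0 ≤ a → 0 ≤ b → a + b = 1 → N (a • x + b • y) ≤ 1)
    {x y : E} (hx : x ∈ S) (hy : y ∈ S) (hNx : 0 < N x) (hNy : 0 < N y) :
    N (x + y) ≤ N x + N y := by
  set s := N x + N y
  have hs : 0 < s := add_pos hNx hNy
  have hx' : (N x)⁻¹ • x ∈ S := hS_smul _ (inv_pos.2 hNx) x hx
  have hy' : (N y)⁻¹ • y ∈ S := hS_smul _ (inv_pos.2 hNy) y hy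
  have hunit {z : E} (hz : z ∈ S) (hNz : 0 < N z) : N ((N z)⁻¹ • z) = 1 := by
    rw [hN_smul _ (inv_pos.2 hNz) z hz, inv_mul_cancel₀ hNz.ne']
  have hweights : N x / s + N y / s = 1 := by rw [← add_div, div_self hs.ne']
  set z := (N x / s) • (N x)⁻¹ • x + (N y / s) • (N y)⁻¹ • y
  have hz : z ∈ S := hS hx' hy' (by positivity) (by positivity) hweights
  have hxy : x + y = s • z := by
    simp only [z, smul_add, smul_smul]
    field_simp
    simp
  calc N (x + y) = s * N z := by rw [hxy, hN_smul s hs z hz]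
    _ ≤ s * 1 := by
        gcongr
        exact hN_comb _ hx' _ hy' (hunit hx hNx) (hunit hy hNy) _ _ (by positivity)
          (by positivity) hweights
    _ = N x + N y := mul_one s

noncomputable def hsymmGauge (n k : ℕ) (p : ℝ) (x : Fin n → ℝ) : ℝ :=
  (hsymm n k (fun i => x i ^ p) / hsymm n 1 (fun i => x i ^ p)) ^ (1 / (p * ((k : ℝ) - 1)))

section hsymmGauge

variable {n k : ℕ} {p : ℝ}

lemma hsymmGauge_smul (hp : p ≠ 0) (hk : k ≠ 1) {c : ℝ} (hc : 0 < c) {x : Fin n → ℝ}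
    (hx : 0 ≤ x) : hsymmGauge n k p (c • x) = c * hsymmGauge n k p x := by
  have hP : p * ((k : ℝ) - 1) ≠ 0 := mul_ne_zero hp (sub_ne_zero.2 (by exact_mod_cast hk))
  have hcx : (fun i => (c • x) i ^ p) = fun i => c ^ p * x i ^ p :=
    funext fun i => Real.mul_rpow hc.le (hx i)
  have hcpow : (c ^ p) ^ k / c ^ p = c ^ (p * ((k : ℝ) - 1)) := by
    rw [← Real.rpow_natCast, ← Real.rpow_mul hc.le, ← Real.rpow_sub hc]
    ring_nf
  have hratio : 0 ≤ hsymm n k (fun i => x i ^ p) / hsymm n 1 (fun i => x i ^ p) :=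
    div_nonneg (hsymm_nonneg fun i => Real.rpow_nonneg (hx i) p)
      (hsymm_nonneg fun i => Real.rpow_nonneg (hx i) p)
  rw [hsymmGauge, hsymmGauge, hcx, hsymm_const_mul, hsymm_const_mul, pow_one, mul_div_mul_comm,
    hcpow, Real.mul_rpow (Real.rpow_nonneg hc.le _) hratio, one_div, Real.rpow_rpow_inv hc.le hP]

lemma hsymmGauge_pos {x : Fin n → ℝ} (hx : 0 ≤ x) (hx0 : x ≠ 0) : 0 < hsymmGauge n k p x := by
  obtain ⟨i, hi⟩ := Function.ne_iff.1 hx0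
  have hxp : 0 < x i ^ p := Real.rpow_pos_of_pos ((hx i).lt_of_ne' hi) p
  have hu : 0 ≤ fun i => x i ^ p := fun i => Real.rpow_nonneg (hx i) p
  exact Real.rpow_pos_of_pos (div_pos (hsymm_pos hu hxp) (hsymm_pos hu hxp)) _

lemma hsymm_eq_hsymm_one_of_hsymmGauge_eq_one (hp : p ≠ 0) (hk : k ≠ 1) {x : Fin n → ℝ}
    (hx : 0 ≤ x) (h : hsymmGauge n k p x = 1) :
    hsymm n k (fun i => x i ^ p) = hsymm n 1 (fun i => x i ^ p) := by
  have hP : p * ((k : ℝ) - 1) ≠ 0 := mul_ne_zero hp (sub_ne_zero.2 (by exact_mod_cast hk))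
  have hu : 0 ≤ fun i => x i ^ p := fun i => Real.rpow_nonneg (hx i) p
  have hratio : hsymm n k (fun i => x i ^ p) / hsymm n 1 (fun i => x i ^ p) = 1 := by
    rw [← Real.rpow_inv_rpow (div_nonneg (hsymm_nonneg hu) (hsymm_nonneg hu)) hP, ← one_div,
      ← hsymmGauge, h, Real.one_rpow]
  have hone : hsymm n 1 (fun i => x i ^ p) ≠ 0 := fun h0 => by
    rw [h0, div_zero] at hratio
    exact zero_ne_one hratio
  exact (div_eq_one_iff_eq hone).1 hratio

lemma hsymmGauge_convexComb_le_one (hp : 1 ≤ p) (hk : 2 ≤ k) {x y : Fin n → ℝ} (hx : 0 ≤ x)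
    (hy : 0 ≤ y) (hNx : hsymmGauge n k p x = 1) (hNy : hsymmGauge n k p y = 1) {a b : ℝ}
    (ha : 0 ≤ a) (hb : 0 ≤ b) (hab : a + b = 1) : hsymmGauge n k p (a • x + b • y) ≤ 1 := by
  have hp0 : p ≠ 0 := by positivity
  have hk1 : k ≠ 1 := by omega
  have hw : 0 ≤ fun i => (a • x + b • y) i ^ p := fun i =>
    Real.rpow_nonneg (add_nonneg (mul_nonneg ha (hx i)) (mul_nonneg hb (hy i))) p
  refine Real.rpow_le_one (div_nonneg (hsymm_nonneg hw) (hsymm_nonneg hw))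
    (hsymm_div_hsymm_one_rpow_convexComb_le_one (by omega) hp hx hy
      (hsymm_eq_hsymm_one_of_hsymmGauge_eq_one hp0 hk1 hx hNx).le
      (hsymm_eq_hsymm_one_of_hsymmGauge_eq_one hp0 hk1 hy hNy).le ha hb hab) ?_
  have hk2 : (2 : ℝ) ≤ k := by exact_mod_cast hk
  exact one_div_nonneg.2 (mul_nonneg (by linarith) (by linarith))

end hsymmGauge

/-- Let `x, y ∈ ℝ₊ⁿ` be nonzero, `p ≥ 1`, and `k ≥ 2` an integer. Then
`(h_k((x+y)^p)/h_1((x+y)^p))^(1/(p(k-1))) ≤ (h_k(x^p)/h_1(x^p))^(1/(p(k-1))) + (h_k(y^p)/h_1(y^p))^(1/(p(k-1)))`. -/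
theorem hsymm_ratio_rpow_subadditive (n : ℕ) (x y : Fin n → ℝ)
    (hx : ∀ i, 0 ≤ x i) (hy : ∀ i, 0 ≤ y i) (hx0 : x ≠ 0) (hy0 : y ≠ 0)
    (p : ℝ) (hp : 1 ≤ p) (k : ℕ) (hk : 2 ≤ k) :
    (hsymm n k (fun i => (x i + y i) ^ p) /
        hsymm n 1 (fun i => (x i + y i) ^ p)) ^ (1 / (p * ((k : ℝ) - 1))) ≤
      (hsymm n k (fun i => x i ^ p) /
          hsymm n 1 (fun i => x i ^ p)) ^ (1 / (p * ((k : ℝ) - 1))) +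
      (hsymm n k (fun i => y i ^ p) /
          hsymm n 1 (fun i => y i ^ p)) ^ (1 / (p * ((k : ℝ) - 1))) :=
  map_add_le_add_of_homogeneous_of_convexComb_le_one (S := Set.Ici 0) (N := hsymmGauge n k p)
    (convex_Ici 0)
    (fun _ hc _ hx => smul_nonneg hc.le hx)
    (fun _ hc _ hx => hsymmGauge_smul (by positivity) (by omega) hc hx)
    (fun _ hx _ hy => hsymmGauge_convexComb_le_one hp hk hx hy)
    (Set.mem_Ici.2 hx) (Set.mem_Ici.2 hy) (hsymmGauge_pos hx hx0) (hsymmGauge_pos hy hy0)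
end
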